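/- Let T be a finite NW-deterministic tile set such that {0,1,…,n}² has no valid Wang tiling by T. Then for the Mealy automaton 𝒜_T, for every state word u ∈ A^{2n}, every p ∈ Σ^n and every q ∈ Σ^ω, one has σ_u(pq) = σ_u(p) ⊥^ω; i.e., after applying 2n generators, all output letters beyond position n equal ⊥. -/

import Mathlib

/-- A Mealy automaton with state set `A` and alphabet `X`:
a transition map `δ : A × X → A` and an output map `σ : A × X → X`. -/
structure Mealy (A X : Type*) where
  δ : A → X → A
  σ : A → X → X

namespace Mealy

variable {A X : Type*} (M : Mealy A X)

/-- The state reached from state `a` after reading the finite word `u`. -/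
def stA : A → List X → A
  | a, [] => a
  | a, x :: u => stA (M.δ a x) u

/-- The output word produced by the single state `a` on the finite input word `u`. -/
def outA : A → List X → List X
  | _, [] => []
  | a, x :: u => M.σ a x :: outA (M.δ a x) u

/-- The extended output map: the action `σ_as` of a state word `as` on a finite word. -/
def outW (as : List A) (u : List X) : List X :=
  as.foldl (fun w b => M.outA b w) u

/-- The extended transition map: `δ_u` applied to a state word. -/
def stW : List A → List X → List A
  | [], _ => []
  | a :: as, u => M.stA a u :: stW as (M.outA a u)

/-- The action of a single state `a` on an infinite word. -/
def outInf (a : A) (w : ℕ → X) : ℕ → X :=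
  fun n => M.σ (M.stA a (List.ofFn fun i : Fin n => w i)) (w n)

/-- The action `σ_as` of a state word on an infinite word. -/
def outWInf (as : List A) (w : ℕ → X) : ℕ → X :=
  as.foldl (fun v b => M.outInf b v) w

/-- The semigroup generated by the Mealy automaton, as the set of all
transformations of infinite words given by nonempty state words. -/
def genSet : Set ((ℕ → X) → (ℕ → X)) :=
  {f | ∃ as : List A, as ≠ [] ∧ f = M.outWInf as}

end Mealy

/-- Concatenation of a finite word with an infinite word. -/
def listApp {X : Type*} (p : List X) (q : ℕ → X) : ℕ → X :=
  fun n => if h : n < p.length then p.get ⟨n, h⟩ else q (n - p.length)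

/-- A tile set is NW-deterministic if each tile is determined by its
north and west colors. -/
def NWDet {T C : Type*} (N _S _E W : T → C) : Prop :=
  ∀ s t : T, N s = N t → W s = W t → s = t

open Classical in
/-- The Mealy automaton `𝒜_T` of a tile set: states and letters are tiles
together with a fresh symbol `⊥` (here `none`); the transition is the reset
`δ(x,y) = y`; the output `σ(s,t)` is the unique tile `r` with `r_N = t_S`
and `r_W = s_E` if it exists, and `⊥` otherwise. -/
noncomputable def tileM {T C : Type*} (N S E W : T → C) :
    Mealy (Option T) (Option T) where
  δ := fun _ y => y
  σ := fun a x =>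
    match a, x with
    | some s, some t =>
        if h : ∃ r : T, N r = S t ∧ W r = E s then some h.choose else none
    | _, _ => none

/-- A valid Wang tiling of the plane `ℤ²`. -/
def ValidZ2 {T C : Type*} (N S E W : T → C) (t : ℤ × ℤ → T) : Prop :=
  ∀ x y : ℤ, N (t (x, y)) = S (t (x, y + 1)) ∧ E (t (x, y)) = W (t (x + 1, y))

/-- A valid Wang tiling of the square `{0, 1, …, n}²`. -/
def ValidSquare {T C : Type*} (N S E W : T → C) (n : ℕ) (t : ℕ → ℕ → T) : Prop :=
  (∀ x y : ℕ, x ≤ n → y < n → N (t x y) = S (t x (y + 1))) ∧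
  (∀ x y : ℕ, x < n → y ≤ n → E (t x y) = W (t (x + 1) y))

/-!
Let `v j` be the word obtained from `pq` by applying the first `j` states of `u`. Since the
transition is a reset, letter `c + 1` of `v (j + 1)` is `σ(v j c, v j (c + 1))`, and letter `0` is
`σ(u_j, v j 0)`. So a letter of `v (j + 1)` other than `⊥` is a tile whose north edge matches the
tile at the same position of `v j` and, off position `0`, whose west edge matches the tile one
position to the left in `v j`. A letter of `v (2n)` other than `⊥` at a position `m ≥ n` thus
forces tiles throughout the cone below it, and the cells `(n + a - b, m - n + a)`, `a, b ≤ n`, of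
that cone form a valid tiling of `{0, …, n}²`.
-/

section listApp

variable {X : Type*}

theorem listApp_nil (q : ℕ → X) : listApp [] q = q := by
  funext k
  simp [listApp]

theorem listApp_cons_zero (x : X) (p : List X) (q : ℕ → X) : listApp (x :: p) q 0 = x := by
  simp [listApp]

theorem listApp_cons_succ (x : X) (p : List X) (q : ℕ → X) (k : ℕ) :
    listApp (x :: p) q (k + 1) = listApp p q k := by
  simp only [listApp, List.length_cons, Nat.add_lt_add_iff_right, Nat.add_sub_add_right]
  rfl

end listApp

namespace Mealy

variable {A X : Type*} (M : Mealy A X)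

theorem outA_length (a : A) (p : List X) : (M.outA a p).length = p.length := by
  induction p generalizing a with
  | nil => rfl
  | cons x p ih => simp [outA, ih]

theorem outW_length (as : List A) (p : List X) : (M.outW as p).length = p.length := by
  induction as generalizing p with
  | nil => rfl
  | cons b as ih => exact (ih _).trans (M.outA_length b p)

theorem outInf_zero (a : A) (w : ℕ → X) : M.outInf a w 0 = M.σ a (w 0) := rfl

theorem outInf_succ (a : A) (w : ℕ → X) (c : ℕ) :
    M.outInf a w (c + 1) = M.outInf (M.δ a (w 0)) (fun k => w (k + 1)) c := by
  simp [outInf, List.ofFn_succ, stA]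

theorem outWInf_take_succ (as : List A) (j : ℕ) (hj : j < as.length) (w : ℕ → X) :
    M.outWInf (as.take (j + 1)) w = M.outInf as[j] (M.outWInf (as.take j) w) := by
  rw [← List.take_concat_get' as j hj]
  simp only [outWInf, List.foldl_append, List.foldl_cons, List.foldl_nil]

theorem outInf_listApp (a : A) (p : List X) (q : ℕ → X) :
    M.outInf a (listApp p q) = listApp (M.outA a p) (M.outInf (M.stA a p) q) := by
  induction p generalizing a with
  | nil => simp [listApp_nil, outA, stA]
  | cons x p ih =>
    funext c
    cases c with
    | zero => simp [outInf_zero, listApp_cons_zero, outA]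
    | succ c =>
      rw [outInf_succ, listApp_cons_zero, funext (listApp_cons_succ x p q), ih, outA,
        listApp_cons_succ, stA]

theorem outWInf_listApp (as : List A) (p : List X) (q : ℕ → X) :
    ∃ q' : ℕ → X, M.outWInf as (listApp p q) = listApp (M.outW as p) q' := by
  induction as generalizing p q with
  | nil => exact ⟨q, rfl⟩
  | cons b as ih =>
    show ∃ q', M.outWInf as (M.outInf b (listApp p q)) = listApp (M.outW as (M.outA b p)) q'
    rw [outInf_listApp]
    exact ih _ _

end Mealy

theorem Mealy.outInf_succ_of_reset {X : Type*} (M : Mealy X X) (hδ : ∀ a x, M.δ a x = x)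
    (a : X) (w : ℕ → X) (c : ℕ) :
    M.outInf a w (c + 1) = M.σ (w c) (w (c + 1)) := by
  induction c generalizing a w with
  | zero => rw [M.outInf_succ, M.outInf_zero, hδ]
  | succ c ih => rw [M.outInf_succ, ih]

section Tiles

variable {T C : Type*} (N S E W : T → C)

theorem tileM_σ_eq_some {a x : Option T} {r : T} (h : (tileM N S E W).σ a x = some r) :
    ∃ s t, a = some s ∧ x = some t ∧ N r = S t ∧ W r = E s := by
  match a, x with
  | some s, some t =>
    refine ⟨s, t, rfl, rfl, ?_⟩
    simp only [tileM] at h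
    split at h
    · next hex => cases h; exact hex.choose_spec
    · cases h
  | none, _ => cases h
  | some _, none => cases h

theorem tileM_outInf_eq_some {a : Option T} {v : ℕ → Option T} {c : ℕ} {r : T}
    (h : (tileM N S E W).outInf a v c = some r) : ∃ t, v c = some t ∧ N r = S t := by
  cases c with
  | zero =>
    obtain ⟨_, t, -, ht, hNS, -⟩ := tileM_σ_eq_some N S E W h
    exact ⟨t, ht, hNS⟩
  | succ c =>
    rw [Mealy.outInf_succ_of_reset _ (fun _ _ => rfl)] at h
    obtain ⟨_, t, -, ht, hNS, -⟩ := tileM_σ_eq_some N S E W h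
    exact ⟨t, ht, hNS⟩

theorem tileM_outInf_succ_eq_some {a : Option T} {v : ℕ → Option T} {c : ℕ} {r : T}
    (h : (tileM N S E W).outInf a v (c + 1) = some r) : ∃ s, v c = some s ∧ W r = E s := by
  rw [Mealy.outInf_succ_of_reset _ (fun _ _ => rfl)] at h
  obtain ⟨s, _, hs, -, -, hWE⟩ := tileM_σ_eq_some N S E W h
  exact ⟨s, hs, hWE⟩

variable {N S E W} {n : ℕ} {f : ℕ → ℕ → Option T}

theorem isSome_of_mem_cone
    (hN : ∀ j < 2 * n, ∀ c r, f (j + 1) c = some r → ∃ t, f j c = some t ∧ N r = S t)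
    (hW : ∀ j < 2 * n, ∀ c r, f (j + 1) (c + 1) = some r → ∃ s, f j c = some s ∧ W r = E s)
    {m : ℕ} (htop : (f (2 * n) m).isSome) :
    ∀ k j c, j + k = 2 * n → c ≤ m → m ≤ c + k → (f j c).isSome := by
  intro k
  induction k with
  | zero =>
    intro j c hj hc hm
    obtain rfl : j = 2 * n := hj
    obtain rfl : c = m := by omega
    exact htop
  | succ k ih =>
    intro j c hj hc hm
    obtain hlt | rfl := hc.lt_or_eq
    · obtain ⟨r, hr⟩ := Option.isSome_iff_exists.mp (ih (j + 1) (c + 1) (by omega) hlt (by omega))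
      obtain ⟨s, hs, -⟩ := hW j (by omega) c r hr
      simp [hs]
    · obtain ⟨r, hr⟩ := Option.isSome_iff_exists.mp (ih (j + 1) c (by omega) le_rfl (by omega))
      obtain ⟨t, ht, -⟩ := hN j (by omega) c r hr
      simp [ht]

theorem exists_validSquare_of_eq_some
    (hN : ∀ j < 2 * n, ∀ c r, f (j + 1) c = some r → ∃ t, f j c = some t ∧ N r = S t)
    (hW : ∀ j < 2 * n, ∀ c r, f (j + 1) (c + 1) = some r → ∃ s, f j c = some s ∧ W r = E s)
    {m : ℕ} (hm : n ≤ m) {r₀ : T} (htop : f (2 * n) m = some r₀) :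
    ∃ t, ValidSquare N S E W n t := by
  set t : ℕ → ℕ → T := fun a b => (f (n + a - b) (m - n + a)).getD r₀
  have ht : ∀ a b, a ≤ n → b ≤ n → f (n + a - b) (m - n + a) = some (t a b) := by
    intro a b ha hb
    obtain ⟨r, hr⟩ := Option.isSome_iff_exists.mp <|
      isSome_of_mem_cone hN hW (m := m) (by simp [htop]) (n - a + b) (n + a - b) (m - n + a)
        (by omega) (by omega) (by omega)
    simp [t, hr]
  refine ⟨t, fun x y hx hy => ?_, fun x y hx hy => ?_⟩
  · have hxy := ht x y hx hy.le
    rw [show n + x - y = n + x - (y + 1) + 1 by omega] at hxy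
    obtain ⟨_, hbelow, hNS⟩ := hN _ (by omega) _ _ hxy
    rw [ht x (y + 1) hx hy] at hbelow
    rw [hNS, Option.some.inj hbelow]
  · have hxy := ht (x + 1) y hx hy
    rw [show n + (x + 1) - y = n + x - y + 1 by omega, ← Nat.add_assoc] at hxy
    obtain ⟨_, hleft, hWE⟩ := hW _ (by omega) _ _ hxy
    rw [ht x y hx.le hy] at hleft
    rw [hWE, Option.some.inj hleft]

end Tiles

theorem stmt_10_general {T C : Type*} (N S E W : T → C)
    (n : ℕ)
    (h : ¬∃ t : ℕ → ℕ → T, ValidSquare N S E W n t)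
    (u : List (Option T)) (hu : u.length = 2 * n)
    (p : List (Option T)) (hp : p.length = n) (q : ℕ → Option T) :
    (tileM N S E W).outWInf u (listApp p q) =
      listApp ((tileM N S E W).outW u p) (fun _ => none) := by
  set M := tileM N S E W
  have hlen : (M.outW u p).length = n := by rw [M.outW_length, hp]
  funext m
  by_cases hm : m < n
  · obtain ⟨q', hq'⟩ := M.outWInf_listApp u p q
    simp [hq', listApp, hlen, hm]
  rw [listApp, dif_neg (by omega)]
  set v : ℕ → ℕ → Option T := fun j => M.outWInf (u.take j) (listApp p q)
  have hv : ∀ j (hj : j < u.length), v (j + 1) = M.outInf u[j] (v j) := fun j hj =>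
    M.outWInf_take_succ u j hj _
  refine Option.eq_none_iff_forall_ne_some.mpr fun r₀ htop => h ?_
  have hN : ∀ j < 2 * n, ∀ c r, v (j + 1) c = some r → ∃ t, v j c = some t ∧ N r = S t := by
    intro j hj c r hr
    rw [hv j (by omega)] at hr
    exact tileM_outInf_eq_some N S E W hr
  have hW : ∀ j < 2 * n, ∀ c r, v (j + 1) (c + 1) = some r → ∃ s, v j c = some s ∧ W r = E s := by
    intro j hj c r hr
    rw [hv j (by omega)] at hr
    exact tileM_outInf_succ_eq_some N S E W hr
  exact exists_validSquare_of_eq_some hN hW (not_lt.mp hm) (by simpa [v, ← hu] using htop)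

/-- if `{0, …, n}²` has no valid Wang tiling by the
NW-deterministic tile set `T`, then for every state word `u` of length `2n`,
every `p ∈ Σ^n` and every `q ∈ Σ^ω`, we have `σ_u(pq) = σ_u(p) ⊥^ω`. -/
theorem stmt_10 {T C : Type*} [Fintype T] (N S E W : T → C)
    (hNW : NWDet N S E W) (n : ℕ)
    (h : ¬∃ t : ℕ → ℕ → T, ValidSquare N S E W n t)
    (u : List (Option T)) (hu : u.length = 2 * n)
    (p : List (Option T)) (hp : p.length = n) (q : ℕ → Option T) :
    (tileM N S E W).outWInf u (listApp p q) =
      listApp ((tileM N S E W).outW u p) (fun _ => none) :=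
  stmt_10_general N S E W n h u hu p hp q
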